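/- arXiv:1403.0062 — 8 statements merged into one kernel-verified Lean document; each statement's English description precedes it below -/
import Mathlib

section
/- Let y₁,…,y_N be unit vectors in ℝ^d and λ₁,…,λ_N > 0. Define p_i = -(1/(2λ_i)) y_i and ω_i = -1/λ_i - 1/(4λ_i²). Then for every unit vector u with ⟨y_j,u⟩ < 1 for all j, and every index i: λ_i/(1-⟨y_i,u⟩) ≤ λ_j/(1-⟨y_j,u⟩) for all j if and only if ‖u - p_i‖² + ω_i ≤ ‖u - p_j‖² + ω_j for all j. That is, the paraboloid intersection cell of y_i equals the intersection of the power cell of (p_i, ω_i) with the unit sphere. -/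
open RealInnerProductSpace

theorem paraboloid_intersection_power_diagram (d N : ℕ)
    (y : Fin N → EuclideanSpace ℝ (Fin d)) (hy : ∀ i, ‖y i‖ = 1)
    (lam : Fin N → ℝ) (hlam : ∀ i, 0 < lam i)
    (p : Fin N → EuclideanSpace ℝ (Fin d))
    (hp : ∀ i, p i = (-(1 / (2 * lam i))) • y i)
    (ω : Fin N → ℝ) (hω : ∀ i, ω i = -1 / lam i - 1 / (4 * (lam i) ^ 2))
    (u : EuclideanSpace ℝ (Fin d)) (hu : ‖u‖ = 1)
    (huy : ∀ j, ⟪y j, u⟫ < 1) (i : Fin N) :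
    (∀ j, lam i / (1 - ⟪y i, u⟫) ≤ lam j / (1 - ⟪y j, u⟫)) ↔
      (∀ j, ‖u - p i‖ ^ 2 + ω i ≤ ‖u - p j‖ ^ 2 + ω j) := by
  have key : ∀ j, ‖u - p j‖ ^ 2 + ω j = 1 - (1 - ⟪y j, u⟫) / lam j := by
    intro j
    have hn : ‖u - p j‖ ^ 2 = ‖u‖ ^ 2 - 2 * ⟪u, p j⟫ + ‖p j‖ ^ 2 :=
      norm_sub_sq_real u (p j)
    have hip : ⟪u, p j⟫ = -(1 / (2 * lam j)) * ⟪y j, u⟫ := by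
      rw [hp, real_inner_smul_right, real_inner_comm]
    have hnp : ‖p j‖ ^ 2 = (1 / (2 * lam j)) ^ 2 := by
      rw [hp, norm_smul, hy, mul_one, Real.norm_eq_abs, sq_abs, neg_sq]
    have hl := (hlam j).ne'
    rw [hn, hip, hnp, hω, hu]
    field_simp
    ring
  constructor <;> intro h j <;> have hj := h j
  · rw [key, key]
    have h1 : 0 < 1 - ⟪y i, u⟫ := by linarith [huy i]
    have h2 : 0 < 1 - ⟪y j, u⟫ := by linarith [huy j]
    rw [div_le_div_iff₀ h1 h2] at hj
    have : (1 - ⟪y j, u⟫) / lam j ≤ (1 - ⟪y i, u⟫) / lam i :=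
      (div_le_div_iff₀ (hlam j) (hlam i)).mpr (by linarith)
    linarith
  · rw [key, key] at hj
    have h1 : 0 < 1 - ⟪y i, u⟫ := by linarith [huy i]
    have h2 : 0 < 1 - ⟪y j, u⟫ := by linarith [huy j]
    rw [div_le_div_iff₀ h1 h2]
    have : (1 - ⟪y j, u⟫) * lam i ≤ (1 - ⟪y i, u⟫) * lam j :=
      (div_le_div_iff₀ (hlam j) (hlam i)).mp (by linarith)
    linarith
end

section
/- Let y and z be distinct unit vectors in ℝ³ and λ, μ > 0. Then the orthogonal projection onto the plane {y}^⊥ of the set ∂P(y,λ) ∩ P(z,μ) is the closed disc in {y}^⊥ with center c = (2λ/‖y-z‖²)·π_y(z) and radius r = 2√(λμ)/‖y-z‖, where π_y is the orthogonal projection onto {y}^⊥. -/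
/-!
Write a point of the boundary paraboloid as `x = w + t • y` with `w ⊥ y`. The boundary equation
`‖x‖ = t + λ` is equivalent to `‖w‖² = 2λt + λ²`, so it determines `t` from `w`, and the projection
onto `{y}ᗮ` maps `∂P(y, λ)` bijectively onto `{y}ᗮ`. Completing the square, with
`c = (2λ / ‖y - z‖²) • π_y z` and `1 - ⟪y, z⟫ = ‖y - z‖² / 2`, gives on `∂P(y, λ)` the identity
`‖π_y x - c‖² = (4λ / ‖y - z‖²) (‖x‖ - ⟪x, z⟫)`; so `x ∈ P(z, μ)` exactly when
`‖π_y x - c‖² ≤ 4λμ / ‖y - z‖² = r²`.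
-/

open RealInnerProductSpace

section

variable {E : Type*} [NormedAddCommGroup E] [InnerProductSpace ℝ E] {x y z w : E} {lam : ℝ}

theorem coe_orthogonalProjectionOnto_orthogonal_span_unit (hy : ‖y‖ = 1) (x : E) :
    ((ℝ ∙ y)ᗮ.orthogonalProjectionOnto x : E) = x - ⟪x, y⟫ • y := by
  rw [Submodule.coe_orthogonalProjectionOnto_apply, Submodule.starProjection_orthogonal_val,
    Submodule.starProjection_unit_singleton ℝ hy, real_inner_comm]

theorem inner_add_smul_of_inner_eq_zero (hy : ‖y‖ = 1) (hw : ⟪w, y⟫ = 0) (t : ℝ) :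
    ⟪w + t • y, y⟫ = t := by
  rw [inner_add_left, hw, real_inner_smul_left, real_inner_self_eq_norm_sq, hy, zero_add, one_pow,
    mul_one]

theorem exists_norm_add_smul_eq_inner_add (hy : ‖y‖ = 1) (hlam : 0 < lam) (hw : ⟪w, y⟫ = 0) :
    ∃ t : ℝ, ‖w + t • y‖ = ⟪w + t • y, y⟫ + lam := by
  obtain ⟨t, ht⟩ : ∃ t, 2 * lam * t = ‖w‖ ^ 2 - lam ^ 2 :=
    ⟨(‖w‖ ^ 2 - lam ^ 2) / (2 * lam), mul_div_cancel₀ _ (by positivity)⟩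
  have hnorm : ‖w + t • y‖ ^ 2 = (t + lam) ^ 2 := by
    rw [norm_add_sq_real, real_inner_smul_right, hw, norm_smul, hy, mul_one, Real.norm_eq_abs,
      sq_abs]
    linear_combination -ht
  have hpos : 0 ≤ t + lam := by nlinarith [sq_nonneg ‖w‖]
  refine ⟨t, ?_⟩
  rw [inner_add_smul_of_inner_eq_zero hy hw, ← pow_left_inj₀ (norm_nonneg _) hpos two_ne_zero,
    hnorm]

theorem norm_sub_sq_of_norm_eq_inner_add (hy : ‖y‖ = 1) (hz : ‖z‖ = 1) (hyz : y ≠ z)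
    (hx : ‖x‖ = ⟪x, y⟫ + lam) :
    ‖(x - ⟪x, y⟫ • y) - (2 * lam / ‖y - z‖ ^ 2) • (z - ⟪z, y⟫ • y)‖ ^ 2 =
      4 * lam / ‖y - z‖ ^ 2 * (‖x‖ - ⟪x, z⟫) := by
  have hyz2 : ‖y - z‖ ^ 2 = 2 * (1 - ⟪z, y⟫) := by
    rw [norm_sub_sq_real, hy, hz, real_inner_comm]; ring
  have hd : 1 - ⟪z, y⟫ ≠ 0 := by
    have : ‖y - z‖ ^ 2 ≠ 0 := by positivity [sub_ne_zero.2 hyz]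
    exact right_ne_zero_of_mul (hyz2 ▸ this)
  have hxx : ⟪x, x⟫ = (⟪x, y⟫ + lam) ^ 2 := by rw [real_inner_self_eq_norm_sq, hx]
  have hyy : ⟪y, y⟫ = 1 := by rw [real_inner_self_eq_norm_sq, hy, one_pow]
  have hzz : ⟪z, z⟫ = 1 := by rw [real_inner_self_eq_norm_sq, hz, one_pow]
  rw [← real_inner_self_eq_norm_sq, hyz2]
  simp only [inner_sub_left, inner_sub_right, real_inner_smul_left, real_inner_smul_right,
    hxx, hyy, hzz, real_inner_comm x z, real_inner_comm x y, real_inner_comm z y, hx]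
  field_simp
  ring

end

theorem projection_of_paraboloid_cap_is_disc
    (y z : EuclideanSpace ℝ (Fin 3)) (hy : ‖y‖ = 1) (hz : ‖z‖ = 1) (hyz : y ≠ z)
    (lam mu : ℝ) (hlam : 0 < lam) (hmu : 0 < mu) :
    (fun x : EuclideanSpace ℝ (Fin 3) =>
        ((Submodule.orthogonalProjectionOnto (ℝ ∙ y)ᗮ x : EuclideanSpace ℝ (Fin 3)))) ''
        {x | ‖x‖ = ⟪x, y⟫ + lam ∧ ‖x‖ ≤ ⟪x, z⟫ + mu} =
      {w : EuclideanSpace ℝ (Fin 3) | w ∈ (ℝ ∙ y)ᗮ ∧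
        ‖w - (2 * lam / ‖y - z‖ ^ 2) •
            ((Submodule.orthogonalProjectionOnto (ℝ ∙ y)ᗮ z : EuclideanSpace ℝ (Fin 3)))‖ ≤
          2 * Real.sqrt (lam * mu) / ‖y - z‖} := by
  have hr : (2 * Real.sqrt (lam * mu) / ‖y - z‖) ^ 2 = 4 * lam / ‖y - z‖ ^ 2 * mu := by
    rw [div_pow, mul_pow, Real.sq_sqrt (by positivity)]; ring
  have hdisc (v : EuclideanSpace ℝ (Fin 3)) :
      ‖v‖ ≤ 2 * Real.sqrt (lam * mu) / ‖y - z‖ ↔ ‖v‖ ^ 2 ≤ 4 * lam / ‖y - z‖ ^ 2 * mu := by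
    rw [← hr, sq_le_sq₀ (norm_nonneg _) (by positivity)]
  have hcoef : 0 < 4 * lam / ‖y - z‖ ^ 2 := by positivity [sub_ne_zero.2 hyz]
  ext w
  simp only [Set.mem_image, Set.mem_ofPred_eq, hdisc,
    coe_orthogonalProjectionOnto_orthogonal_span_unit hy]
  constructor
  · rintro ⟨x, ⟨hx, hcap⟩, rfl⟩
    refine ⟨coe_orthogonalProjectionOnto_orthogonal_span_unit hy x ▸ Submodule.coe_mem _, ?_⟩
    rw [norm_sub_sq_of_norm_eq_inner_add hy hz hyz hx]
    gcongr
    linarith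
  · rintro ⟨hw, hball⟩
    rw [Submodule.mem_orthogonal_singleton_iff_inner_left] at hw
    obtain ⟨t, ht⟩ := exists_norm_add_smul_eq_inner_add hy hlam hw
    have hproj : (w + t • y) - ⟪w + t • y, y⟫ • y = w := by
      rw [inner_add_smul_of_inner_eq_zero hy hw, add_sub_cancel_right]
    rw [← hproj, norm_sub_sq_of_norm_eq_inner_add hy hz hyz ht] at hball
    exact ⟨w + t • y, ⟨ht, by linarith [le_of_mul_le_mul_left hball hcoef]⟩, hproj⟩
end

section
/- If y and z are distinct unit vectors in ℝ^d and λ, μ > 0, then the intersection P(y,λ) ∩ P(z,μ) of the two solid confocal paraboloids is a compact set. -/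
open RealInnerProductSpace

theorem confocal_paraboloids_intersection_compact (d : ℕ)
    (y z : EuclideanSpace ℝ (Fin d)) (hy : ‖y‖ = 1) (hz : ‖z‖ = 1) (hyz : y ≠ z)
    (lam mu : ℝ) (hlam : 0 < lam) (hmu : 0 < mu) :
    IsCompact ({x : EuclideanSpace ℝ (Fin d) | ‖x‖ ≤ ⟪x, y⟫ + lam} ∩
      {x | ‖x‖ ≤ ⟪x, z⟫ + mu}) := by
  have hyz2 : ‖y + z‖ < 2 := by
    have h1 : ⟪y, z⟫ < 1 := by
      rcases lt_or_eq_of_le (real_inner_le_norm y z) with h | h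
      · calc ⟪y, z⟫ < ‖y‖ * ‖z‖ := h
          _ = 1 := by rw [hy, hz]; ring
      · exfalso
        have : ‖y - z‖ ^ 2 = 0 := by
          rw [norm_sub_pow_two_real, hy, hz, h, hy, hz]; ring
        have := pow_eq_zero_iff (n := 2) (by norm_num) |>.mp this
        rw [norm_eq_zero] at this
        exact hyz (sub_eq_zero.mp this)
    have h2 : ‖y + z‖ ^ 2 < 4 := by
      rw [norm_add_pow_two_real, hy, hz]; nlinarith
    nlinarith [norm_nonneg (y + z)]
  have hc : 0 < 2 - ‖y + z‖ := by linarith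
  rw [Metric.isCompact_iff_isClosed_bounded]
  constructor
  · apply IsClosed.inter
    · exact isClosed_le continuous_norm
        ((continuous_id.inner continuous_const).add continuous_const)
    · exact isClosed_le continuous_norm
        ((continuous_id.inner continuous_const).add continuous_const)
  · rw [isBounded_iff_forall_norm_le]
    refine ⟨(lam + mu) / (2 - ‖y + z‖), ?_⟩
    rintro x ⟨h1, h2⟩
    rw [le_div_iff₀ hc]
    have key : ⟪x, y + z⟫ ≤ ‖x‖ * ‖y + z‖ := real_inner_le_norm x (y + z)
    rw [inner_add_right] at key
    simp only [Set.mem_setOf_eq] at h1 h2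
    nlinarith
end

section
/- Fix a unit vector y in ℝ³ and λ > 0. The map F sending a pair (z, μ), where z is a unit vector distinct from y and μ > 0, to the pair (c, r) ∈ {y}^⊥ × (0,∞) with c = (2λ/‖y-z‖²)·π_y(z) and r = 2√(λμ)/‖y-z‖, is injective. -/
open RealInnerProductSpace

/-!
On the unit sphere `‖y - z‖ ^ 2 = 2 * (1 - ⟪y, z⟫)`, so the centre `c` is `λ / 2` times the
stereographic projection of `z` from the pole `y`. Stereographic projection is injective on the
sphere punctured at `y`, so `c` determines `z`; then `‖y - z‖` is known and `r` determines `μ`.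
-/

section StereographicProjection

variable {E : Type*} [NormedAddCommGroup E] [InnerProductSpace ℝ E] {v : E}

theorem norm_sub_sq_eq_two_mul_one_sub_inner {x : E} (hv : ‖v‖ = 1) (hx : ‖x‖ = 1) :
    ‖v - x‖ ^ 2 = 2 * (1 - ⟪v, x⟫) := by
  rw [norm_sub_sq_real, hv, hx]
  ring

theorem smul_orthogonalProjectionOnto_eq_smul_stereoToFun {x : E} (hv : ‖v‖ = 1)
    (hx : ‖x‖ = 1) (a : ℝ) :
    (2 * a / ‖v - x‖ ^ 2) • ((ℝ ∙ v)ᗮ.orthogonalProjectionOnto x : E) =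
      (a / 2) • (stereoToFun v x : E) := by
  rw [stereoToFun_apply, Submodule.coe_smul_of_tower, smul_smul,
    norm_sub_sq_eq_two_mul_one_sub_inner hv hx, innerSL_apply_apply,
    mul_div_mul_left a _ two_ne_zero, div_mul_div_cancel₀ two_ne_zero]

theorem injOn_stereoToFun (hv : ‖v‖ = 1) :
    Set.InjOn (stereoToFun v) (Metric.sphere (0 : E) 1 \ {v}) := by
  rintro x₁ ⟨hx₁, hx₁v⟩ x₂ ⟨hx₂, hx₂v⟩ h
  have h₁ := stereo_left_inv hv (x := ⟨x₁, hx₁⟩) hx₁v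
  have h₂ := stereo_left_inv hv (x := ⟨x₂, hx₂⟩) hx₂v
  rw [h, h₂] at h₁
  exact congrArg Subtype.val h₁.symm

end StereographicProjection

theorem F_injective
    (y : EuclideanSpace ℝ (Fin 3)) (hy : ‖y‖ = 1) (lam : ℝ) (hlam : 0 < lam)
    (z₁ z₂ : EuclideanSpace ℝ (Fin 3)) (hz₁ : ‖z₁‖ = 1) (hz₂ : ‖z₂‖ = 1)
    (hz₁y : z₁ ≠ y) (hz₂y : z₂ ≠ y)
    (mu₁ mu₂ : ℝ) (hmu₁ : 0 < mu₁) (hmu₂ : 0 < mu₂)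
    (hc : (2 * lam / ‖y - z₁‖ ^ 2) •
            ((Submodule.orthogonalProjectionOnto (ℝ ∙ y)ᗮ z₁ : EuclideanSpace ℝ (Fin 3))) =
          (2 * lam / ‖y - z₂‖ ^ 2) •
            ((Submodule.orthogonalProjectionOnto (ℝ ∙ y)ᗮ z₂ : EuclideanSpace ℝ (Fin 3))))
    (hr : 2 * Real.sqrt (lam * mu₁) / ‖y - z₁‖ = 2 * Real.sqrt (lam * mu₂) / ‖y - z₂‖) :
    z₁ = z₂ ∧ mu₁ = mu₂ := by
  have hz : z₁ = z₂ := by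
    rw [smul_orthogonalProjectionOnto_eq_smul_stereoToFun hy hz₁,
      smul_orthogonalProjectionOnto_eq_smul_stereoToFun hy hz₂] at hc
    have hstereo := smul_right_injective _ (by positivity : lam / 2 ≠ 0) hc
    exact injOn_stereoToFun hy ⟨mem_sphere_zero_iff_norm.mpr hz₁, hz₁y⟩
      ⟨mem_sphere_zero_iff_norm.mpr hz₂, hz₂y⟩ (Subtype.ext hstereo)
  subst hz
  have hdist : ‖y - z₁‖ ≠ 0 := norm_ne_zero_iff.mpr (sub_ne_zero.mpr hz₁y.symm)
  have hsqrt : Real.sqrt (lam * mu₁) = Real.sqrt (lam * mu₂) := by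
    exact mul_left_cancel₀ two_ne_zero ((div_left_inj' hdist).mp hr)
  have hprod := (Real.sqrt_inj (by positivity) (by positivity)).mp hsqrt
  exact ⟨rfl, mul_left_cancel₀ hlam.ne' hprod⟩
end

section
/- Let y₁,…,y_N be unit vectors in ℝ^d and λ₁,…,λ_N > 0. Define p_i = (1/(2λ_i)) y_i and ω_i = 1/λ_i - 1/(4λ_i²). Then for every unit vector u with ⟨y_j,u⟩ < 1 for all j and every index i: λ_i/(1-⟨y_i,u⟩) ≥ λ_j/(1-⟨y_j,u⟩) for all j if and only if ‖u - p_i‖² + ω_i ≤ ‖u - p_j‖² + ω_j for all j. That is, the paraboloid union cell of y_i equals the intersection of the power cell of (p_i,ω_i) with the unit sphere. -/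
open RealInnerProductSpace

theorem paraboloid_union_power_diagram (d N : ℕ)
    (y : Fin N → EuclideanSpace ℝ (Fin d)) (hy : ∀ i, ‖y i‖ = 1)
    (lam : Fin N → ℝ) (hlam : ∀ i, 0 < lam i)
    (p : Fin N → EuclideanSpace ℝ (Fin d))
    (hp : ∀ i, p i = (1 / (2 * lam i)) • y i)
    (ω : Fin N → ℝ) (hω : ∀ i, ω i = 1 / lam i - 1 / (4 * (lam i) ^ 2))
    (u : EuclideanSpace ℝ (Fin d)) (hu : ‖u‖ = 1)
    (huy : ∀ j, ⟪y j, u⟫ < 1) (i : Fin N) :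
    (∀ j, lam j / (1 - ⟪y j, u⟫) ≤ lam i / (1 - ⟪y i, u⟫)) ↔
      (∀ j, ‖u - p i‖ ^ 2 + ω i ≤ ‖u - p j‖ ^ 2 + ω j) := by
  have ht : ∀ j, 0 < 1 - ⟪y j, u⟫ := fun j => by linarith [huy j]
  have key : ∀ j, ‖u - p j‖ ^ 2 + ω j = 1 + (1 - ⟪y j, u⟫) / lam j := by
    intro j
    have hl := (hlam j).ne'
    have h1 : ‖u - p j‖ ^ 2 = ‖u‖ ^ 2 - 2 * ⟪u, p j⟫ + ‖p j‖ ^ 2 :=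
      norm_sub_sq_real u (p j)
    have h2 : ⟪u, p j⟫ = (1 / (2 * lam j)) * ⟪y j, u⟫ := by
      rw [hp j, real_inner_smul_right, real_inner_comm]
    have h3 : ‖p j‖ ^ 2 = (1 / (2 * lam j)) ^ 2 := by
      rw [hp j, norm_smul, hy j, mul_one, Real.norm_eq_abs, sq_abs]
    rw [h1, h2, h3, hu, hω j]
    field_simp
    ring
  have equiv : ∀ j, (lam j / (1 - ⟪y j, u⟫) ≤ lam i / (1 - ⟪y i, u⟫)) ↔
      (‖u - p i‖ ^ 2 + ω i ≤ ‖u - p j‖ ^ 2 + ω j) := by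
    intro j
    rw [key i, key j]
    rw [div_le_div_iff₀ (ht j) (ht i)]
    constructor
    · intro h
      have : (1 - ⟪y i, u⟫) / lam i ≤ (1 - ⟪y j, u⟫) / lam j :=
        (div_le_div_iff₀ (hlam i) (hlam j)).2 (by nlinarith)
      linarith
    · intro h
      have : (1 - ⟪y i, u⟫) / lam i ≤ (1 - ⟪y j, u⟫) / lam j := by linarith
      have := (div_le_div_iff₀ (hlam i) (hlam j)).1 this
      nlinarith
  exact forall_congr' equiv
end

section
/- Let y₁,…,y_N be nonzero points of ℝ^d and e₁,…,e_N ∈ (0,1), and set d_i = ‖y_i‖(1-e_i²)/(2e_i). Define p_i = -(e_i/(2d_i))·(y_i/‖y_i‖) and ω_i = -1/d_i - e_i²/(4d_i²). Then for every unit vector u and index i: d_i/(1 - e_i⟨u, y_i/‖y_i‖⟩) ≤ d_j/(1 - e_j⟨u, y_j/‖y_j‖⟩) for all j if and only if ‖u - p_i‖² + ω_i ≤ ‖u - p_j‖² + ω_j for all j. That is, the ellipsoid intersection cell of y_i equals the intersection of the power cell of (p_i,ω_i) with the unit sphere. -/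
open RealInnerProductSpace

theorem ellipsoid_intersection_power_diagram (dim N : ℕ)
    (y : Fin N → EuclideanSpace ℝ (Fin dim)) (hy : ∀ i, y i ≠ 0)
    (e : Fin N → ℝ) (he : ∀ i, e i ∈ Set.Ioo (0 : ℝ) 1)
    (d : Fin N → ℝ) (hd : ∀ i, d i = ‖y i‖ * (1 - (e i) ^ 2) / (2 * e i))
    (p : Fin N → EuclideanSpace ℝ (Fin dim))
    (hp : ∀ i, p i = (-(e i / (2 * d i))) • (‖y i‖⁻¹ • y i))
    (ω : Fin N → ℝ) (hω : ∀ i, ω i = -1 / d i - (e i) ^ 2 / (4 * (d i) ^ 2))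
    (u : EuclideanSpace ℝ (Fin dim)) (hu : ‖u‖ = 1) (i : Fin N) :
    (∀ j, d i / (1 - e i * ⟪u, ‖y i‖⁻¹ • y i⟫) ≤ d j / (1 - e j * ⟪u, ‖y j‖⁻¹ • y j⟫)) ↔
      (∀ j, ‖u - p i‖ ^ 2 + ω i ≤ ‖u - p j‖ ^ 2 + ω j) := by
  set t : Fin N → ℝ := fun j => ⟪u, ‖y j‖⁻¹ • y j⟫ with ht
  have hdpos : ∀ j, 0 < d j := by
    intro j
    rw [hd j]
    have h1 := (he j).1
    have h2 := (he j).2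
    have : (0:ℝ) < ‖y j‖ := norm_pos_iff.mpr (hy j)
    have h3 : 0 < 1 - (e j)^2 := by nlinarith
    positivity
  have hApos : ∀ j, 0 < 1 - e j * t j := by
    intro j
    have habs : |t j| ≤ 1 := by
      have := abs_real_inner_le_norm u (‖y j‖⁻¹ • y j)
      have hnv : ‖(‖y j‖⁻¹ • y j)‖ = 1 := by
        rw [norm_smul, norm_inv, norm_norm,
          inv_mul_cancel₀ (norm_ne_zero_iff.mpr (hy j))]
      rw [hu, hnv] at this
      simpa using this
    have h1 := (he j).1
    have h2 := (he j).2
    have := abs_le.mp habs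
    nlinarith
  have key : ∀ j, ‖u - p j‖ ^ 2 + ω j = 1 - (1 - e j * t j) / d j := by
    intro j
    have hsq : ‖u - p j‖ ^ 2 = ‖u‖^2 - 2 * ⟪u, p j⟫ + ‖p j‖^2 := by
      rw [@norm_sub_sq_real]
    have hip : ⟪u, p j⟫ = -(e j / (2 * d j)) * t j := by
      rw [hp j, real_inner_smul_right]
    have hnp : ‖p j‖^2 = (e j / (2 * d j))^2 := by
      rw [hp j, norm_smul, norm_smul, norm_inv, norm_norm,
        inv_mul_cancel₀ (norm_ne_zero_iff.mpr (hy j))]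
      simp [Real.norm_eq_abs, sq_abs, div_pow, mul_pow]
    rw [hsq, hip, hnp, hω j, hu]
    have hdne : d j ≠ 0 := (hdpos j).ne'
    field_simp
    ring
  constructor
  · intro h j
    have hj := h j
    rw [key i, key j]
    have hineq : (1 - e j * t j) / d j ≤ (1 - e i * t i) / d i := by
      rw [div_le_div_iff₀ (hdpos j) (hdpos i)]
      rw [div_le_div_iff₀ (hApos i) (hApos j)] at hj
      nlinarith
    linarith
  · intro h j
    have hj := h j
    rw [key i, key j] at hj
    rw [div_le_div_iff₀ (hApos i) (hApos j)]
    have hineq : (1 - e j * t j) / d j ≤ (1 - e i * t i) / d i := by linarith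
    rw [div_le_div_iff₀ (hdpos j) (hdpos i)] at hineq
    nlinarith
end

section
/- Let (p_i, ω_i)_{1≤i≤N} be weighted points in ℝ^d with p_i ≠ 0 for all i. Then there exist points y_i ≠ 0 and eccentricities e_i ∈ (0,1) such that for every i, the ellipsoid intersection cell of the family (E(y_i,e_i)) equals the intersection of the power cell of (p_i, ω_i) with the unit sphere. Specifically, after subtracting a sufficiently large common constant from all weights (which does not change the power cells), one can take y_i = (-4/((ω_i+‖p_i‖²)² - 4‖p_i‖²))·p_i and e_i = -2‖p_i‖/(ω_i + ‖p_i‖²). -/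
open RealInnerProductSpace

private lemma ellipsoid_aux (a w t : ℝ) (ha : 0 < a) (hw0 : w ≠ 0)
    (hd : w ^ 2 - 4 * a ^ 2 ≠ 0) (h1 : 2 * t - w ≠ 0) :
    4 / (w ^ 2 - 4 * a ^ 2) * a * (1 - (-2 * a / w) ^ 2) / (2 * (-2 * a / w)) /
      (1 - -2 * a / w * (-a⁻¹ * t)) = (2 * t - w)⁻¹ := by
  have ha0 : a ≠ 0 := ne_of_gt ha
  have h2 : w - 2 * t ≠ 0 := fun h => h1 (by linarith)
  have hmid : 1 - -2 * a / w * (-a⁻¹ * t) = (w - 2 * t) / w := by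
    field_simp
  rw [hmid]
  field_simp
  ring

theorem power_diagram_realized_by_ellipsoids (dim N : ℕ)
    (p : Fin N → EuclideanSpace ℝ (Fin dim)) (hp : ∀ i, p i ≠ 0)
    (ω : Fin N → ℝ) :
    ∃ (C : ℝ) (y : Fin N → EuclideanSpace ℝ (Fin dim)) (e : Fin N → ℝ),
      (∀ i, y i ≠ 0) ∧ (∀ i, e i ∈ Set.Ioo (0 : ℝ) 1) ∧
      (∀ i, y i = (-4 / (((ω i - C) + ‖p i‖ ^ 2) ^ 2 - 4 * ‖p i‖ ^ 2)) • p i) ∧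
      (∀ i, e i = -2 * ‖p i‖ / ((ω i - C) + ‖p i‖ ^ 2)) ∧
      (∀ u : EuclideanSpace ℝ (Fin dim), ‖u‖ = 1 → ∀ i,
        ((∀ j, (‖y i‖ * (1 - (e i) ^ 2) / (2 * e i)) / (1 - e i * ⟪u, ‖y i‖⁻¹ • y i⟫) ≤
                (‖y j‖ * (1 - (e j) ^ 2) / (2 * e j)) / (1 - e j * ⟪u, ‖y j‖⁻¹ • y j⟫)) ↔
          (∀ j, ‖u - p i‖ ^ 2 + ω i ≤ ‖u - p j‖ ^ 2 + ω j))) := by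
  have hpn : ∀ i, 0 < ‖p i‖ := fun i => norm_pos_iff.mpr (hp i)
  set C : ℝ := (∑ i, (|ω i| + ‖p i‖ ^ 2 + 2 * ‖p i‖)) + 1 with hCdef
  clear_value C
  have hw : ∀ i, ω i - C + ‖p i‖ ^ 2 ≤ -2 * ‖p i‖ - 1 := by
    intro i
    have h1 : ω i + ‖p i‖ ^ 2 + 2 * ‖p i‖ ≤ ∑ j, (|ω j| + ‖p j‖ ^ 2 + 2 * ‖p j‖) := by
      have h2 := Finset.single_le_sum (f := fun j => |ω j| + ‖p j‖ ^ 2 + 2 * ‖p j‖)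
        (fun j _ => by positivity) (Finset.mem_univ i)
      have h3 : ω i ≤ |ω i| := le_abs_self _
      linarith
    simp only [hCdef]
    linarith
  have hden : ∀ i, 0 < ((ω i - C) + ‖p i‖ ^ 2) ^ 2 - 4 * ‖p i‖ ^ 2 := by
    intro i
    nlinarith [hw i, hpn i]
  set Y : Fin N → EuclideanSpace ℝ (Fin dim) :=
    fun i => (-4 / (((ω i - C) + ‖p i‖ ^ 2) ^ 2 - 4 * ‖p i‖ ^ 2)) • p i with hYdef
  set E : Fin N → ℝ := fun i => -2 * ‖p i‖ / ((ω i - C) + ‖p i‖ ^ 2) with hEdef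
  clear_value Y E
  have hwne : ∀ i, (ω i - C + ‖p i‖ ^ 2) ≠ 0 := by
    intro i; have := hw i; have := hpn i; intro h; nlinarith
  refine ⟨C, Y, E, ?_, ?_, fun i => by simp only [hYdef], fun i => by simp only [hEdef], ?_⟩
  · intro i
    rw [hYdef]
    exact smul_ne_zero (by have := hden i; intro h; rw [div_eq_zero_iff] at h; rcases h with h | h <;> [norm_num at h; linarith]) (hp i)
  · intro i
    have hwi := hw i
    have hpi := hpn i
    have hrew : E i = 2 * ‖p i‖ / (-(ω i - C + ‖p i‖ ^ 2)) := by
      simp only [hEdef]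
      rw [div_neg, ← neg_div]
      ring_nf
    constructor
    · rw [hrew]; exact div_pos (by linarith) (by linarith)
    · rw [hrew, div_lt_one (by linarith)]; linarith
  · intro u hu i
    have hS : ∀ k, (‖Y k‖ * (1 - (E k) ^ 2) / (2 * E k)) / (1 - E k * ⟪u, ‖Y k‖⁻¹ • Y k⟫)
        = (2 * ⟪u, p k⟫ - (ω k - C + ‖p k‖ ^ 2))⁻¹ := by
      intro k
      have ha : 0 < ‖p k‖ := hpn k
      have hdk : 0 < ((ω k - C) + ‖p k‖ ^ 2) ^ 2 - 4 * ‖p k‖ ^ 2 := hden k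
      have hny : ‖Y k‖ = 4 / (((ω k - C) + ‖p k‖ ^ 2) ^ 2 - 4 * ‖p k‖ ^ 2) * ‖p k‖ := by
        simp only [hYdef]
        rw [norm_smul, Real.norm_eq_abs, abs_of_neg (by exact div_neg_of_neg_of_pos (by norm_num) hdk)]
        ring
      have hane : (‖p k‖:ℝ) ≠ 0 := ne_of_gt ha
      have hd0 : ((ω k - C) + ‖p k‖ ^ 2) ^ 2 - 4 * ‖p k‖ ^ 2 ≠ 0 := ne_of_gt hdk
      have hunit : ‖Y k‖⁻¹ • Y k = (-(‖p k‖⁻¹)) • p k := by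
        rw [hny]
        simp only [hYdef, smul_smul]
        congr 1
        field_simp
      have hip : ⟪u, ‖Y k‖⁻¹ • Y k⟫ = -(‖p k‖⁻¹) * ⟪u, p k⟫ := by
        rw [hunit, real_inner_smul_right]
      have hEk : E k = -2 * ‖p k‖ / ((ω k - C) + ‖p k‖ ^ 2) := by simp only [hEdef]
      have habs : |⟪u, p k⟫| ≤ ‖p k‖ := by
        have := abs_real_inner_le_norm u (p k)
        rwa [hu, one_mul] at this
      have ht1 : -‖p k‖ ≤ ⟪u, p k⟫ := (abs_le.mp habs).1
      have hpos : 0 < 2 * ⟪u, p k⟫ - (ω k - C + ‖p k‖ ^ 2) := by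
        have := hw k; linarith
      have h1 : (2 * ⟪u, p k⟫ - (ω k - C + ‖p k‖ ^ 2)) ≠ 0 := ne_of_gt hpos
      rw [hip, hny, hEk]
      exact ellipsoid_aux ‖p k‖ _ ⟪u, p k⟫ ha (hwne k) hd0 h1
    have hpow : ∀ k, ‖u - p k‖ ^ 2 = 1 - 2 * ⟪u, p k⟫ + ‖p k‖ ^ 2 := by
      intro k
      rw [norm_sub_sq_real, hu]
      ring
    have hposk : ∀ k, 0 < 2 * ⟪u, p k⟫ - (ω k - C + ‖p k‖ ^ 2) := by
      intro k
      have habs : |⟪u, p k⟫| ≤ ‖p k‖ := by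
        have := abs_real_inner_le_norm u (p k)
        rwa [hu, one_mul] at this
      have := (abs_le.mp habs).1
      have := hw k; linarith
    constructor
    · intro h j
      have hj := h j
      rw [hS i, hS j, inv_le_inv₀ (hposk i) (hposk j)] at hj
      rw [hpow i, hpow j]
      linarith
    · intro h j
      have hj := h j
      rw [hpow i, hpow j] at hj
      rw [hS i, hS j, inv_le_inv₀ (hposk i) (hposk j)]
      linarith
end

section
/- Let X be a measure space with finite measure ρ, c : X × {1,…,N} → ℝ with each c(·,i) integrable, and α ∈ ℝ^N. Fix γ ∈ ℝ^N and a measurable selection T : X → {1,…,N} with c(u,T(u)) + γ_{T(u)} = min_i (c(u,i)+γ_i) for ρ-a.e. u. Then for Φ(γ) = ∫_X min_i(c(u,i)+γ_i) dρ - Σ_i γ_i α_i, the vector v ∈ ℝ^N with v_i = ρ(T⁻¹({i})) - α_i belongs to the superdifferential of Φ at γ: for all κ ∈ ℝ^N, Φ(κ) ≤ Φ(γ) + ⟨v, κ - γ⟩. -/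
/-!
Because `T` selects an index, `⨅ i, (c u i + κ i) ≤ c u (T u) + κ (T u)` for every `κ`, with
equality almost everywhere at `κ = γ`. Integrated, the right-hand side is affine in `κ` with
slope `i ↦ ρ (T ⁻¹' {i})`, so it is an affine majorant of `Φ` touching it at `γ`.
-/

open MeasureTheory

theorem abs_ciInf_le_sum_abs {ι : Type*} [Fintype ι] (f : ι → ℝ) :
    |⨅ i, f i| ≤ ∑ i, |f i| := by
  cases isEmpty_or_nonempty ι with
  | inl _ => simp [Real.iInf_of_isEmpty]
  | inr _ =>
    obtain ⟨j, hj⟩ := exists_eq_ciInf_of_finite (f := f)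
    rw [← hj]
    exact Finset.single_le_sum (f := fun i => |f i|) (fun i _ => abs_nonneg _) (Finset.mem_univ j)

theorem comp_index_eq_sum_indicator_preimage {X ι : Type*} [Fintype ι] (T : X → ι)
    (f : ι → X → ℝ) : (fun x => f (T x) x) = ∑ i, (T ⁻¹' {i}).indicator (f i) := by
  ext x
  rw [Finset.sum_apply, Finset.sum_eq_single (T x) (fun i _ hi => ?_) (by simp)]
  · simp
  · simp [Ne.symm hi]

section

variable {X ι : Type*} [MeasurableSpace X] {μ : Measure X} [Fintype ι]

theorem integrable_iInf {f : ι → X → ℝ} (hf : ∀ i, Integrable (f i) μ) :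
    Integrable (fun x => ⨅ i, f i x) μ :=
  (integrable_finsetSum .univ fun i _ => (hf i).abs).mono'
    (AEMeasurable.iInf fun i => (hf i).aemeasurable).aestronglyMeasurable
    (.of_forall fun x => abs_ciInf_le_sum_abs fun i => f i x)

variable [MeasurableSpace ι] [MeasurableSingletonClass ι] {T : X → ι}

theorem integrable_comp_index (hT : Measurable T) {f : ι → X → ℝ}
    (hf : ∀ i, Integrable (f i) μ) : Integrable (fun x => f (T x) x) μ := by
  rw [comp_index_eq_sum_indicator_preimage]
  exact integrable_finsetSum' _ fun i _ => (hf i).indicator (hT (measurableSet_singleton i))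

theorem integral_comp_eq_sum_measureReal_preimage [IsFiniteMeasure μ] (hT : Measurable T)
    (g : ι → ℝ) : ∫ x, g (T x) ∂μ = ∑ i, μ.real (T ⁻¹' {i}) * g i := by
  have hT' (i : ι) : MeasurableSet (T ⁻¹' {i}) := hT (measurableSet_singleton i)
  rw [comp_index_eq_sum_indicator_preimage T fun i _ => g i,
    Finset.sum_fn, integral_finsetSum _ fun i _ => (integrable_const _).indicator (hT' i)]
  simp only [integral_indicator_const _ (hT' _), smul_eq_mul]

theorem integral_add_comp_index [IsFiniteMeasure μ] (hT : Measurable T) {f : ι → X → ℝ}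
    (hf : ∀ i, Integrable (f i) μ) (κ : ι → ℝ) :
    ∫ x, (f (T x) x + κ (T x)) ∂μ =
      ∫ x, f (T x) x ∂μ + ∑ i, μ.real (T ⁻¹' {i}) * κ i := by
  rw [integral_add (integrable_comp_index hT hf)
      (integrable_comp_index (f := fun i _ => κ i) hT fun _ => integrable_const _),
    integral_comp_eq_sum_measureReal_preimage hT]

end

theorem superdifferential_of_Phi_general (X : Type*) [MeasurableSpace X]
    (ρ : Measure X) [IsFiniteMeasure ρ]
    (N : ℕ)
    (c : X → Fin N → ℝ)
    (hint : ∀ i, Integrable (fun u => c u i) ρ)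
    (α : Fin N → ℝ) (γ : Fin N → ℝ)
    (T : X → Fin N) (hT : Measurable T)
    (hTmin : ∀ᵐ u ∂ρ, c u (T u) + γ (T u) = ⨅ i, (c u i + γ i))
    (v : Fin N → ℝ) (hv : ∀ i, v i = (ρ (T ⁻¹' {i})).toReal - α i) :
    ∀ κ : Fin N → ℝ,
      ((∫ u, (⨅ i, (c u i + κ i)) ∂ρ) - ∑ i, κ i * α i) ≤
      ((∫ u, (⨅ i, (c u i + γ i)) ∂ρ) - ∑ i, γ i * α i) + ∑ i, v i * (κ i - γ i) := by
  intro κ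
  have hκ : ∫ u, (⨅ i, (c u i + κ i)) ∂ρ ≤ ∫ u, (c u (T u) + κ (T u)) ∂ρ :=
    integral_mono (integrable_iInf fun i => (hint i).add (integrable_const _))
      (integrable_comp_index hT fun i => (hint i).add (integrable_const _))
      fun u => ciInf_le (Finite.bddBelow_range _) (T u)
  have hγ : ∫ u, (⨅ i, (c u i + γ i)) ∂ρ = ∫ u, (c u (T u) + γ (T u)) ∂ρ :=
    (integral_congr_ae hTmin).symm
  rw [integral_add_comp_index hT hint] at hκ hγ
  simp only [hv, measureReal_def, mul_sub, sub_mul, mul_comm (α _), Finset.sum_sub_distrib]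
    at hκ hγ ⊢
  linarith

theorem superdifferential_of_Phi (X : Type*) [MeasurableSpace X]
    (ρ : Measure X) [IsFiniteMeasure ρ]
    (N : ℕ) (hN : 0 < N)
    (c : X → Fin N → ℝ) (hmeas : ∀ i, Measurable fun u => c u i)
    (hint : ∀ i, Integrable (fun u => c u i) ρ)
    (α : Fin N → ℝ) (γ : Fin N → ℝ)
    (T : X → Fin N) (hT : Measurable T)
    (hTmin : ∀ᵐ u ∂ρ, c u (T u) + γ (T u) = ⨅ i, (c u i + γ i))
    (v : Fin N → ℝ) (hv : ∀ i, v i = (ρ (T ⁻¹' {i})).toReal - α i) :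
    ∀ κ : Fin N → ℝ,
      ((∫ u, (⨅ i, (c u i + κ i)) ∂ρ) - ∑ i, κ i * α i) ≤
      ((∫ u, (⨅ i, (c u i + γ i)) ∂ρ) - ∑ i, γ i * α i) + ∑ i, v i * (κ i - γ i) :=
  superdifferential_of_Phi_general X ρ N c hint α γ T hT hTmin v hv
end
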